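/- arXiv:2507.12117 — 2 statements merged into one kernel-verified Lean document; each statement's English description precedes it below -/
import Mathlib

section
/- Let H be a 2×2 complex Hermitian matrix and let ρ : ℝ → M₂(ℂ) be a curve satisfying the imaginary-time (Wick-rotated) equation ρ'(τ) = −(Hρ(τ) + ρ(τ)H) entrywise. Then for every θ ∈ (0,π) and φ ∈ ℝ, the function τ ↦ Q_{ρ(τ)}(θ,φ) is differentiable with derivative −4π·( Q_H·Q_{ρ(τ)} + ∂Q_H/∂θ · ∂Q_{ρ(τ)}/∂θ + (1/sin²θ)·∂Q_H/∂φ · ∂Q_{ρ(τ)}/∂φ ); that is, imaginary-time evolution is a cosine-bracket gradient flow of the Q function. -/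
/-!
Write `A = a₀ + a·σ` and let `n = (sin θ cos φ, sin θ sin φ, cos θ)` be the Bloch vector of the
coherent state, so that `2π Q_A = a₀ + a·n`. Since `n, ∂_θ n, (sin θ)⁻¹ ∂_φ n` is an orthonormal
frame, `4π² (Q_A Q_B + ∂_θQ_A ∂_θQ_B + sin⁻²θ ∂_φQ_A ∂_φQ_B) = a₀b₀ + a₀ b·n + b₀ a·n + a·b`,
which is `π Q_{AB+BA}`. As `Q` is linear in the matrix, `∂_τ Q_ρ = Q_{-(Hρ+ρH)}`.
-/

open Matrix Complex Real MeasureTheory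

noncomputable section

/-- The spin coherent state |θ,φ⟩ = cos(θ/2)|0⟩ + e^{iφ} sin(θ/2)|1⟩. -/
def cohVec (θ φ : ℝ) : Fin 2 → ℂ :=
  ![((Real.cos (θ / 2) : ℝ) : ℂ),
    Complex.exp (Complex.I * (φ : ℂ)) * ((Real.sin (θ / 2) : ℝ) : ℂ)]

/-- The Husimi Q function of a 2×2 complex matrix. -/
def Qfun (A : Matrix (Fin 2) (Fin 2) ℂ) (θ φ : ℝ) : ℂ :=
  (1 / (2 * Real.pi) : ℂ) *
    ∑ k, ∑ l, (starRingEnd ℂ) (cohVec θ φ k) * A k l * cohVec θ φ l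

/-- ∂Q_A/∂θ. -/
def Qθ (A : Matrix (Fin 2) (Fin 2) ℂ) (θ φ : ℝ) : ℂ :=
  deriv (fun t => Qfun A t φ) θ

/-- ∂Q_A/∂φ. -/
def Qφ (A : Matrix (Fin 2) (Fin 2) ℂ) (θ φ : ℝ) : ℂ :=
  deriv (fun p => Qfun A θ p) φ

theorem Qfun_eq (A : Matrix (Fin 2) (Fin 2) ℂ) (θ φ : ℝ) :
    Qfun A θ φ = (1 / (2 * π) : ℂ) * ((A 0 0 + A 1 1) / 2 + Complex.cos θ * (A 0 0 - A 1 1) / 2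
      + Complex.sin θ * (cexp (I * φ) * A 0 1 + cexp (-(I * φ)) * A 1 0) / 2) := by
  obtain ⟨x, rfl⟩ : ∃ x, θ = 2 * x := ⟨θ / 2, by ring⟩
  have hconj : starRingEnd ℂ (cexp (I * φ)) = cexp (-(I * φ)) := by
    rw [← Complex.exp_conj]; simp
  have hexp : cexp (-(I * φ)) * cexp (I * φ) = 1 := by
    rw [← Complex.exp_add, neg_add_cancel, Complex.exp_zero]
  simp only [Qfun, cohVec, Fin.sum_univ_two, cons_val_zero, cons_val_one, map_mul,
    conj_ofReal, hconj, mul_div_cancel_left₀ x two_ne_zero]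
  push_cast
  rw [Complex.cos_two_mul, Complex.sin_two_mul]
  linear_combination (1 / (2 * π) : ℂ) *
    (Complex.sin x ^ 2 * A 1 1 * hexp + A 1 1 * Complex.sin_sq_add_cos_sq x)

theorem Qfun_neg (A : Matrix (Fin 2) (Fin 2) ℂ) (θ φ : ℝ) : Qfun (-A) θ φ = -Qfun A θ φ := by
  simp only [Qfun, Matrix.neg_apply, mul_neg, neg_mul, Finset.sum_neg_distrib]

theorem hasDerivAt_Qfun_of_entries {ρ : ℝ → Matrix (Fin 2) (Fin 2) ℂ}
    {ρ' : Matrix (Fin 2) (Fin 2) ℂ} {τ : ℝ}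
    (hρ : ∀ i j, HasDerivAt (fun t => ρ t i j) (ρ' i j) τ) (θ φ : ℝ) :
    HasDerivAt (fun t => Qfun (ρ t) θ φ) (Qfun ρ' θ φ) τ :=
  (HasDerivAt.fun_sum fun k _ => HasDerivAt.fun_sum fun l _ =>
    ((hρ k l).const_mul _).mul_const _).const_mul _

theorem hasDerivAt_Qfun_theta (A : Matrix (Fin 2) (Fin 2) ℂ) (θ φ : ℝ) :
    HasDerivAt (fun t => Qfun A t φ) ((1 / (2 * π) : ℂ) * (-Complex.sin θ * (A 0 0 - A 1 1) / 2
      + Complex.cos θ * (cexp (I * φ) * A 0 1 + cexp (-(I * φ)) * A 1 0) / 2)) θ := by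
  simp only [Qfun_eq]
  have h := (((((Complex.hasDerivAt_cos θ).mul_const (A 0 0 - A 1 1)).div_const 2).const_add
    ((A 0 0 + A 1 1) / 2)).fun_add (((Complex.hasDerivAt_sin θ).mul_const
      (cexp (I * φ) * A 0 1 + cexp (-(I * φ)) * A 1 0)).div_const 2)).const_mul (1 / (2 * π) : ℂ)
  exact h.comp_ofReal

theorem hasDerivAt_Qfun_phi (A : Matrix (Fin 2) (Fin 2) ℂ) (θ φ : ℝ) :
    HasDerivAt (fun p => Qfun A θ p) ((1 / (2 * π) : ℂ) *
      (Complex.sin θ * I * (cexp (I * φ) * A 0 1 - cexp (-(I * φ)) * A 1 0) / 2)) φ := by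
  simp only [Qfun_eq]
  have he := ((hasDerivAt_id' (φ : ℂ)).const_mul I).cexp
  have hē := ((hasDerivAt_id' (φ : ℂ)).const_mul I).fun_neg.cexp
  have h := (((((he.mul_const (A 0 1)).fun_add (hē.mul_const (A 1 0))).const_mul
    (Complex.sin θ)).div_const 2).const_add
      ((A 0 0 + A 1 1) / 2 + Complex.cos θ * (A 0 0 - A 1 1) / 2)).const_mul (1 / (2 * π) : ℂ)
  convert h.comp_ofReal using 1
  ring

theorem Qfun_mul_add_mul (A B : Matrix (Fin 2) (Fin 2) ℂ) {θ : ℝ} (hθ : Real.sin θ ≠ 0) (φ : ℝ) :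
    Qfun (A * B + B * A) θ φ = 4 * π * (Qfun A θ φ * Qfun B θ φ + Qθ A θ φ * Qθ B θ φ
      + ((1 / Real.sin θ ^ 2 : ℝ) : ℂ) * Qφ A θ φ * Qφ B θ φ) := by
  have hexp : cexp (I * φ) * cexp (-(I * φ)) = 1 := by
    rw [← Complex.exp_add, add_neg_cancel, Complex.exp_zero]
  have hπ : (π : ℂ) ≠ 0 := ofReal_ne_zero.mpr pi_ne_zero
  have hS : Complex.sin θ ≠ 0 := by exact_mod_cast hθ
  rw [Qθ, Qθ, Qφ, Qφ, (hasDerivAt_Qfun_theta A θ φ).deriv, (hasDerivAt_Qfun_theta B θ φ).deriv,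
    (hasDerivAt_Qfun_phi A θ φ).deriv, (hasDerivAt_Qfun_phi B θ φ).deriv, Qfun_eq, Qfun_eq, Qfun_eq]
  simp only [Matrix.add_apply, mul_apply, Fin.sum_univ_two]
  push_cast
  field_simp
  linear_combination
    -4 * ((A 0 0 - A 1 1) * (B 0 0 - B 1 1) + (cexp (I * φ) * A 0 1 + cexp (-(I * φ)) * A 1 0)
      * (cexp (I * φ) * B 0 1 + cexp (-(I * φ)) * B 1 0)) * Complex.sin_sq_add_cos_sq (θ : ℂ)
    - 8 * (A 0 1 * B 1 0 + A 1 0 * B 0 1) * hexp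
    - 4 * (cexp (I * φ) * A 0 1 - cexp (-(I * φ)) * A 1 0)
      * (cexp (I * φ) * B 0 1 - cexp (-(I * φ)) * B 1 0) * I_sq

theorem imaginary_time_evolution_is_cosine_bracket_flow_general
    (H : Matrix (Fin 2) (Fin 2) ℂ)
    (ρ : ℝ → Matrix (Fin 2) (Fin 2) ℂ)
    (hρ : ∀ τ, ∀ i j, HasDerivAt (fun τ' => ρ τ' i j)
      ((-(H * ρ τ + ρ τ * H)) i j) τ) :
    ∀ θ ∈ Set.Ioo (0 : ℝ) Real.pi, ∀ φ : ℝ, ∀ τ : ℝ,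
      HasDerivAt (fun τ' => Qfun (ρ τ') θ φ)
        (-(4 * Real.pi : ℂ) *
          (Qfun H θ φ * Qfun (ρ τ) θ φ + Qθ H θ φ * Qθ (ρ τ) θ φ
            + ((1 / (Real.sin θ) ^ 2 : ℝ) : ℂ) * Qφ H θ φ * Qφ (ρ τ) θ φ)) τ := by
  intro θ hθ φ τ
  have hsin : Real.sin θ ≠ 0 := (sin_pos_of_pos_of_lt_pi hθ.1 hθ.2).ne'
  simpa only [Qfun_neg, Qfun_mul_add_mul H (ρ τ) hsin, neg_mul] using
    hasDerivAt_Qfun_of_entries (hρ τ) θ φ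

/-- imaginary-time (Wick-rotated) evolution is a cosine-bracket
gradient flow of the Q function. -/
theorem imaginary_time_evolution_is_cosine_bracket_flow
    (H : Matrix (Fin 2) (Fin 2) ℂ) (hH : H.IsHermitian)
    (ρ : ℝ → Matrix (Fin 2) (Fin 2) ℂ)
    (hρ : ∀ τ, ∀ i j, HasDerivAt (fun τ' => ρ τ' i j)
      ((-(H * ρ τ + ρ τ * H)) i j) τ) :
    ∀ θ ∈ Set.Ioo (0 : ℝ) Real.pi, ∀ φ : ℝ, ∀ τ : ℝ,
      HasDerivAt (fun τ' => Qfun (ρ τ') θ φ)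
        (-(4 * Real.pi : ℂ) *
          (Qfun H θ φ * Qfun (ρ τ) θ φ + Qθ H θ φ * Qθ (ρ τ) θ φ
            + ((1 / (Real.sin θ) ^ 2 : ℝ) : ℂ) * Qφ H θ φ * Qφ (ρ τ) θ φ)) τ :=
  imaginary_time_evolution_is_cosine_bracket_flow_general H ρ hρ
end
end

section
/- Fix s ∈ [−1,1]. The Stratonovich–Weyl correspondence satisfies the traciality (dual pairing) property: for all 2×2 complex matrices A and B, Tr(AB) = 2π · ∫₀^{2π}∫₀^π Tr[A Δ^{(s)}(θ,φ)] · Tr[B Δ^{(−s)}(θ,φ)] sinθ dθ dφ. In particular, expectation values are computed by pairing the Q function (s = −1) of the state against the P function (s = +1) of the observable. -/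
open Matrix Complex Real MeasureTheory

noncomputable section

/-- λ(s) = 3^{(1+s)/2}. -/
def lam (s : ℝ) : ℝ := (3 : ℝ) ^ ((1 + s) / 2)

/-- The s-parametrized Stratonovich–Weyl kernel
Δ^{(s)}(θ,φ) = (1/(2π))·( λ(s) |θ,φ⟩⟨θ,φ| − ((λ(s) − 1)/2)·I₂ ). -/
def swKernel (s θ φ : ℝ) : Matrix (Fin 2) (Fin 2) ℂ :=
  ((1 / (2 * Real.pi) : ℝ) : ℂ) •
    (((lam s : ℝ) : ℂ) • Matrix.of (fun k l => cohVec θ φ k * (starRingEnd ℂ) (cohVec θ φ l))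
      - (((lam s - 1) / 2 : ℝ) : ℂ) • (1 : Matrix (Fin 2) (Fin 2) ℂ))

/-!
On the coherent state with Bloch vector `n = (sin θ cos φ, sin θ sin φ, cos θ)`, the symbol
`Tr (A Δ⁽ˢ⁾)` is the affine function `(2π)⁻¹ (Tr A / 2 + λ(s) a · n)` of `n`, where
`A = (Tr A / 2) I + a · σ`.
Integrating the product of two such functions over the sphere, only the constant term and the second
moments `∫ nᵢ nⱼ = (4π/3) δᵢⱼ` survive, and `λ(s) λ(-s) = 3` exactly cancels the `1/3`, leaving
`Tr A Tr B / 2 + 2 a · b = Tr (A B)`.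
-/
lemma lam_mul_lam_neg (s : ℝ) : lam s * lam (-s) = 3 := by
  rw [lam, lam, ← Real.rpow_add (by norm_num), show (1 + s) / 2 + (1 + -s) / 2 = 1 by ring,
    Real.rpow_one]

/-- For `A = (Tr A / 2) I + a · σ`: `a · n = (A 0 0 - A 1 1) / 2 * cos θ + offDiagPhase A φ * sin θ`. -/
def offDiagPhase (A : Matrix (Fin 2) (Fin 2) ℂ) (φ : ℝ) : ℂ :=
  (A 0 1 * exp (I * φ) + A 1 0 * exp (-(I * φ))) / 2

@[fun_prop]
lemma continuous_offDiagPhase (A : Matrix (Fin 2) (Fin 2) ℂ) : Continuous (offDiagPhase A) := by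
  unfold offDiagPhase; fun_prop

lemma trace_mul_swKernel (s θ φ : ℝ) (A : Matrix (Fin 2) (Fin 2) ℂ) :
    trace (A * swKernel s θ φ) =
      (2 * π : ℂ)⁻¹ * (trace A / 2 + lam s * ((A 0 0 - A 1 1) / 2) * Real.cos θ +
        lam s * offDiagPhase A φ * Real.sin θ) := by
  have hθ : 2 * ((θ : ℂ) / 2) = θ := by ring
  have hcos := Complex.cos_sq ((θ : ℂ) / 2)
  have hsin := Complex.sin_two_mul ((θ : ℂ) / 2)
  rw [hθ] at hcos hsin
  have hexp : exp (I * φ) * exp (-(I * φ)) = 1 := by rw [← Complex.exp_add]; simp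
  have hconj : (starRingEnd ℂ) (exp (I * φ)) = exp (-(I * φ)) := by
    rw [← Complex.exp_conj, map_mul, conj_I, conj_ofReal, neg_mul]
  simp only [trace, diag, Fin.sum_univ_two, mul_apply, swKernel, Matrix.smul_apply,
    Matrix.sub_apply, one_apply, of_apply, cohVec, cons_val_zero, cons_val_one, smul_eq_mul,
    map_mul, conj_ofReal, hconj, offDiagPhase]
  push_cast
  linear_combination (2 * π : ℂ)⁻¹ * lam s * ((A 0 0 - A 1 1) * hcos
    - (A 0 1 * exp (I * φ) + A 1 0 * exp (-(I * φ))) / 2 * hsin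
    + A 1 1 * Complex.sin (θ / 2) ^ 2 * hexp + A 1 1 * Complex.sin_sq_add_cos_sq ((θ : ℂ) / 2))

lemma integral_trig_mul_trig_mul_sin (p q r p' q' r' : ℂ) :
    ∫ θ in (0 : ℝ)..π, (p + q * Real.cos θ + r * Real.sin θ) *
        (p' + q' * Real.cos θ + r' * Real.sin θ) * Real.sin θ =
      2 * p * p' + 2 / 3 * q * q' + 4 / 3 * r * r' + π / 2 * (p * r' + p' * r) := by
  have expand : (fun θ : ℝ => (p + q * Real.cos θ + r * Real.sin θ) *
      (p' + q' * Real.cos θ + r' * Real.sin θ) * (Real.sin θ : ℂ)) = fun θ =>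
        p * p' * ((Real.sin θ : ℝ) : ℂ) + (p * q' + p' * q) * ((Real.sin θ * Real.cos θ : ℝ) : ℂ) +
        (p * r' + p' * r) * ((Real.sin θ ^ 2 : ℝ) : ℂ) +
        q * q' * ((Real.sin θ * Real.cos θ ^ 2 : ℝ) : ℂ) +
        (q * r' + q' * r) * ((Real.sin θ ^ 2 * Real.cos θ : ℝ) : ℂ) +
        r * r' * ((Real.sin θ ^ 3 : ℝ) : ℂ) := by
    funext θ; push_cast; ring
  rw [expand, intervalIntegral.integral_add, intervalIntegral.integral_add,
    intervalIntegral.integral_add, intervalIntegral.integral_add, intervalIntegral.integral_add]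
  · simp only [intervalIntegral.integral_const_mul, intervalIntegral.integral_ofReal, integral_sin,
      integral_sin_mul_cos₁, integral_sin_sq, integral_sin_mul_cos_sq, integral_sin_sq_mul_cos,
      integral_sin_pow_three, Real.sin_pi, Real.sin_zero, Real.cos_pi, Real.cos_zero]
    push_cast
    ring
  all_goals exact Continuous.intervalIntegrable (by fun_prop) _ _

lemma integral_exp_int_mul_I (n : ℤ) (hn : n ≠ 0) :
    ∫ φ in (0 : ℝ)..2 * π, exp (n * I * φ) = 0 := by
  rw [integral_exp_mul_complex (mul_ne_zero (Int.cast_ne_zero.mpr hn) I_ne_zero)]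
  have hperiod : exp (n * I * ((2 * π : ℝ) : ℂ)) = 1 := by
    rw [← exp_int_mul_two_pi_mul_I n]; push_cast; ring_nf
  push_cast at hperiod
  simp [hperiod]

lemma integral_offDiagPhase (A : Matrix (Fin 2) (Fin 2) ℂ) :
    ∫ φ in (0 : ℝ)..2 * π, offDiagPhase A φ = 0 := by
  have hpos : ∫ φ in (0 : ℝ)..2 * π, exp (I * φ) = 0 := by
    simpa using integral_exp_int_mul_I 1 one_ne_zero
  have hneg : ∫ φ in (0 : ℝ)..2 * π, exp (-(I * φ)) = 0 := by
    simpa [neg_mul] using integral_exp_int_mul_I (-1) (by norm_num)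
  simp only [offDiagPhase]
  rw [intervalIntegral.integral_div, intervalIntegral.integral_add,
    intervalIntegral.integral_const_mul, intervalIntegral.integral_const_mul, hpos, hneg]
  · simp
  all_goals exact Continuous.intervalIntegrable (by fun_prop) _ _

lemma integral_offDiagPhase_mul (A B : Matrix (Fin 2) (Fin 2) ℂ) :
    ∫ φ in (0 : ℝ)..2 * π, offDiagPhase A φ * offDiagPhase B φ =
      π / 2 * (A 0 1 * B 1 0 + A 1 0 * B 0 1) := by
  have expand : (fun φ => offDiagPhase A φ * offDiagPhase B φ) = fun φ : ℝ =>
      (A 0 1 * B 1 0 + A 1 0 * B 0 1) / 4 + A 0 1 * B 0 1 / 4 * exp ((2 : ℤ) * I * φ) +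
        A 1 0 * B 1 0 / 4 * exp ((-2 : ℤ) * I * φ) := by
    funext φ
    have hpos : exp (I * φ) * exp (I * φ) = exp ((2 : ℤ) * I * φ) := by
      rw [← Complex.exp_add]; push_cast; ring_nf
    have hneg : exp (-(I * φ)) * exp (-(I * φ)) = exp ((-2 : ℤ) * I * φ) := by
      rw [← Complex.exp_add]; push_cast; ring_nf
    have hinv : exp (I * φ) * exp (-(I * φ)) = 1 := by rw [← Complex.exp_add]; simp
    simp only [offDiagPhase]
    linear_combination (A 0 1 * B 0 1 / 4) * hpos + (A 1 0 * B 1 0 / 4) * hneg +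
      ((A 0 1 * B 1 0 + A 1 0 * B 0 1) / 4) * hinv
  rw [expand, intervalIntegral.integral_add, intervalIntegral.integral_add,
    intervalIntegral.integral_const_mul, intervalIntegral.integral_const_mul,
    integral_exp_int_mul_I 2 (by norm_num), integral_exp_int_mul_I (-2) (by norm_num)]
  · simp only [intervalIntegral.integral_const, Complex.real_smul]
    push_cast
    ring
  all_goals exact Continuous.intervalIntegrable (by fun_prop) _ _

lemma integral_trace_mul_swKernel_mul_sin (s φ : ℝ) (A B : Matrix (Fin 2) (Fin 2) ℂ) :
    ∫ θ in (0 : ℝ)..π, trace (A * swKernel s θ φ) * trace (B * swKernel (-s) θ φ) * Real.sin θ =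
      (2 * π : ℂ)⁻¹ ^ 2 * ((trace A * trace B + (A 0 0 - A 1 1) * (B 0 0 - B 1 1)) / 2 +
        4 * (offDiagPhase A φ * offDiagPhase B φ) +
        π / 4 * (lam (-s) * trace A * offDiagPhase B φ + lam s * trace B * offDiagPhase A φ)) := by
  have hlam : (lam s : ℂ) * lam (-s) = 3 := by exact_mod_cast lam_mul_lam_neg s
  have h := congrArg ((2 * π : ℂ)⁻¹ ^ 2 * ·) (integral_trig_mul_trig_mul_sin
    (trace A / 2) (lam s * ((A 0 0 - A 1 1) / 2)) (lam s * offDiagPhase A φ)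
    (trace B / 2) (lam (-s) * ((B 0 0 - B 1 1) / 2)) (lam (-s) * offDiagPhase B φ))
  rw [← intervalIntegral.integral_const_mul] at h
  refine (intervalIntegral.integral_congr fun θ _ => ?_).trans (h.trans ?_)
  · simp only [trace_mul_swKernel]
    ring
  linear_combination (2 * π : ℂ)⁻¹ ^ 2 * ((A 0 0 - A 1 1) * (B 0 0 - B 1 1) / 6 +
    4 / 3 * offDiagPhase A φ * offDiagPhase B φ) * hlam

theorem sw_traciality_general (s : ℝ)
    (A B : Matrix (Fin 2) (Fin 2) ℂ) :
    Matrix.trace (A * B) =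
      (2 * Real.pi : ℂ) *
        ∫ φ in (0:ℝ)..(2 * Real.pi), ∫ θ in (0:ℝ)..Real.pi,
          Matrix.trace (A * swKernel s θ φ) * Matrix.trace (B * swKernel (-s) θ φ)
            * ((Real.sin θ : ℝ) : ℂ) := by
  simp_rw [integral_trace_mul_swKernel_mul_sin]
  rw [intervalIntegral.integral_const_mul, intervalIntegral.integral_add,
    intervalIntegral.integral_add, intervalIntegral.integral_const_mul, integral_offDiagPhase_mul,
    intervalIntegral.integral_const_mul, intervalIntegral.integral_add,
    intervalIntegral.integral_const_mul, intervalIntegral.integral_const_mul,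
    integral_offDiagPhase, integral_offDiagPhase, intervalIntegral.integral_const]
  · simp only [trace, diag, mul_apply, Fin.sum_univ_two, Complex.real_smul]
    push_cast
    field_simp
    ring
  all_goals exact Continuous.intervalIntegrable (by fun_prop) _ _

/-- traciality (dual pairing) of the Stratonovich–Weyl correspondence:
Tr(AB) = 2π ∫ Tr[A Δ^{(s)}(θ,φ)] Tr[B Δ^{(−s)}(θ,φ)] sinθ dθ dφ. -/
theorem sw_traciality (s : ℝ) (hs : s ∈ Set.Icc (-1 : ℝ) 1)
    (A B : Matrix (Fin 2) (Fin 2) ℂ) :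
    Matrix.trace (A * B) =
      (2 * Real.pi : ℂ) *
        ∫ φ in (0:ℝ)..(2 * Real.pi), ∫ θ in (0:ℝ)..Real.pi,
          Matrix.trace (A * swKernel s θ φ) * Matrix.trace (B * swKernel (-s) θ φ)
            * ((Real.sin θ : ℝ) : ℂ) :=
  sw_traciality_general s A B
end
end
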